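/- Let d and m₀ be two distinct positive probability vectors on a finite set T. The function f(π) = K²(π·d + (1−π)·m₀, m₀) is continuous and strictly increasing on [0,1], with f(0) = 0 and f(1) = K²(d, m₀). Consequently, for every c with 0 ≤ c ≤ K²(d, m₀) there is a unique π ∈ [0,1] with K²(π·d + (1−π)·m₀, m₀) = c, so there is a one-to-one correspondence between the mixing weight π and the tube radius c. -/

import Mathlib

/-!
On `[0,1]` the mixture `π d + (1-π) m₀` stays positive, so `f(π) = K²(π d + (1-π) m₀, m₀)` is
differentiable there with `f'(π) = ∑ m₀ (m₀ - d) / (π d + (1-π) m₀)`. Writing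
`m₀ (m₀ - d) = (m₀ - d)(π d + (1-π) m₀) + π (d - m₀)²` and using `∑ d = ∑ m₀` gives
`f'(π) = π ∑ (d - m₀)² / (π d + (1-π) m₀)`, which is positive for `π > 0` as `d ≠ m₀`.
Hence `f` is strictly increasing, and the intermediate value theorem gives the correspondence.
-/

open Finset

/-- A positive probability vector on `Fin N`. -/
def IsPPV {N : ℕ} (p : Fin N → ℝ) : Prop := (∀ t, 0 < p t) ∧ ∑ t, p t = 1

/-- Kullback–Leibler distance `K²(p, m) = ∑ m(t) log(m(t)/p(t))`. -/
noncomputable def Ksq {N : ℕ} (p m : Fin N → ℝ) : ℝ := ∑ t, m t * Real.log (m t / p t)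

theorem StrictMonoOn.existsUnique_eq_of_continuousOn_Icc {f : ℝ → ℝ} {a b c : ℝ} (hab : a ≤ b)
    (hcont : ContinuousOn f (Set.Icc a b)) (hmono : StrictMonoOn f (Set.Icc a b))
    (hc : c ∈ Set.Icc (f a) (f b)) : ∃! x, x ∈ Set.Icc a b ∧ f x = c := by
  obtain ⟨x, hx, hfx⟩ := intermediate_value_Icc hab hcont hc
  exact ⟨x, ⟨hx, hfx⟩, fun y hy => hmono.injOn hy.1 hx (hy.2.trans hfx.symm)⟩

theorem HasDerivAt.const_mul_log_const_div {f : ℝ → ℝ} {f' a x : ℝ} (hf : HasDerivAt f f' x)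
    (ha : a ≠ 0) (hfx : f x ≠ 0) :
    HasDerivAt (fun y => a * Real.log (a / f y)) (-(a * f') / f x) x := by
  have hquot := (hasDerivAt_const x a).div hf hfx
  refine ((hquot.log (div_ne_zero ha hfx)).const_mul a).congr_deriv ?_
  simp only [Pi.div_apply]
  field_simp
  ring

theorem Ksq_self {N : ℕ} (m : Fin N → ℝ) : Ksq m m = 0 := by
  refine sum_eq_zero fun t _ => ?_
  rcases eq_or_ne (m t) 0 with h | h
  · simp [h]
  · simp [div_self h]

section Mixture

variable {N : ℕ} {d m : Fin N → ℝ} {π : ℝ}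

def mixture (π : ℝ) (d m : Fin N → ℝ) : Fin N → ℝ := fun t => π * d t + (1 - π) * m t

theorem mixture_pos (hd : ∀ t, 0 < d t) (hm : ∀ t, 0 < m t) (hπ : π ∈ Set.Icc (0 : ℝ) 1)
    (t : Fin N) : 0 < mixture π d m t :=
  convex_Ioi (0 : ℝ) (hd t) (hm t) hπ.1 (sub_nonneg.2 hπ.2) (add_sub_cancel _ _)

theorem hasDerivAt_Ksq_mixture (hm : ∀ t, m t ≠ 0) (hmix : ∀ t, mixture π d m t ≠ 0) :
    HasDerivAt (fun π => Ksq (mixture π d m) m)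
      (∑ t, m t * (m t - d t) / mixture π d m t) π := by
  refine HasDerivAt.fun_sum fun t _ => ?_
  have hlin : HasDerivAt (fun π => mixture π d m t) (d t - m t) π := by
    have haffine : (fun π => mixture π d m t) = fun y => y * (d t - m t) + m t :=
      funext fun y => by simp only [mixture]; ring
    simpa only [haffine, one_mul] using ((hasDerivAt_id' π).mul_const (d t - m t)).add_const (m t)
  refine (hlin.const_mul_log_const_div (hm t) (hmix t)).congr_deriv ?_
  ring

theorem sum_mul_sub_div_mixture (hsum : ∑ t, d t = ∑ t, m t)
    (hmix : ∀ t, mixture π d m t ≠ 0) :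
    ∑ t, m t * (m t - d t) / mixture π d m t = π * ∑ t, (d t - m t) ^ 2 / mixture π d m t := by
  have hterm : ∀ t, m t * (m t - d t) / mixture π d m t
      = (m t - d t) + π * ((d t - m t) ^ 2 / mixture π d m t) := by
    intro t
    have hmixt := hmix t
    field_simp
    simp only [mixture]
    ring
  rw [sum_congr rfl fun t _ => hterm t, sum_add_distrib, sum_sub_distrib, hsum, sub_self,
    zero_add, mul_sum]

theorem sum_sq_sub_div_mixture_pos (hne : d ≠ m) (hmix : ∀ t, 0 < mixture π d m t) :
    0 < ∑ t, (d t - m t) ^ 2 / mixture π d m t := by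
  obtain ⟨t₀, ht₀⟩ := Function.ne_iff.1 hne
  refine sum_pos' (fun t _ => div_nonneg (sq_nonneg _) (hmix t).le) ⟨t₀, mem_univ t₀, ?_⟩
  exact div_pos (sq_pos_of_ne_zero (sub_ne_zero.2 ht₀)) (hmix t₀)

theorem continuousOn_Ksq_mixture (hd : ∀ t, 0 < d t) (hm : ∀ t, 0 < m t) :
    ContinuousOn (fun π => Ksq (mixture π d m) m) (Set.Icc 0 1) := fun _ hπ =>
  (hasDerivAt_Ksq_mixture (fun t => (hm t).ne') fun t => (mixture_pos hd hm hπ t).ne')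
    |>.continuousAt.continuousWithinAt

theorem strictMonoOn_Ksq_mixture (hd : IsPPV d) (hm : IsPPV m) (hne : d ≠ m) :
    StrictMonoOn (fun π => Ksq (mixture π d m) m) (Set.Icc 0 1) := by
  refine strictMonoOn_of_deriv_pos (convex_Icc 0 1) (continuousOn_Ksq_mixture hd.1 hm.1) ?_
  intro π hπ
  rw [interior_Icc] at hπ
  have hmix : ∀ t, 0 < mixture π d m t := mixture_pos hd.1 hm.1 (Set.Ioo_subset_Icc_self hπ)
  rw [(hasDerivAt_Ksq_mixture (fun t => (hm.1 t).ne') fun t => (hmix t).ne').deriv,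
    sum_mul_sub_div_mixture (hd.2.trans hm.2.symm) fun t => (hmix t).ne']
  exact mul_pos hπ.1 (sum_sq_sub_div_mixture_pos hne hmix)

end Mixture

theorem pi_c_correspondence_general {N : ℕ}
    (d m₀ : Fin N → ℝ) (hd : IsPPV d) (hm : IsPPV m₀) (hne : d ≠ m₀) :
    ContinuousOn (fun π : ℝ => Ksq (fun t => π * d t + (1 - π) * m₀ t) m₀)
        (Set.Icc (0 : ℝ) 1) ∧
    StrictMonoOn (fun π : ℝ => Ksq (fun t => π * d t + (1 - π) * m₀ t) m₀)
        (Set.Icc (0 : ℝ) 1) ∧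
    Ksq (fun t => (0 : ℝ) * d t + (1 - 0) * m₀ t) m₀ = 0 ∧
    Ksq (fun t => (1 : ℝ) * d t + (1 - 1) * m₀ t) m₀ = Ksq d m₀ ∧
    ∀ c : ℝ, 0 ≤ c → c ≤ Ksq d m₀ →
      ∃! π : ℝ, π ∈ Set.Icc (0 : ℝ) 1 ∧
        Ksq (fun t => π * d t + (1 - π) * m₀ t) m₀ = c := by
  have hcont := continuousOn_Ksq_mixture hd.1 hm.1
  have hmono := strictMonoOn_Ksq_mixture hd hm hne
  have hzero : Ksq (fun t => (0 : ℝ) * d t + (1 - 0) * m₀ t) m₀ = 0 := by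
    simpa using Ksq_self m₀
  have hone : Ksq (fun t => (1 : ℝ) * d t + (1 - 1) * m₀ t) m₀ = Ksq d m₀ := by simp
  refine ⟨hcont, hmono, hzero, hone, fun c hc₀ hc₁ => ?_⟩
  exact hmono.existsUnique_eq_of_continuousOn_Icc zero_le_one hcont
    ⟨hzero.symm ▸ hc₀, hone.symm ▸ hc₁⟩

/-- The map `π ↦ K²(π d + (1-π) m₀, m₀)` is continuous and strictly increasing on `[0,1]`,
taking the value `0` at `π = 0` and `K²(d, m₀)` at `π = 1`; hence there is a one-to-one
correspondence between the mixing weight `π ∈ [0,1]` and the tube radius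
`c ∈ [0, K²(d, m₀)]`. -/
theorem pi_c_correspondence {N : ℕ} (hN : 1 ≤ N)
    (d m₀ : Fin N → ℝ) (hd : IsPPV d) (hm : IsPPV m₀) (hne : d ≠ m₀) :
    ContinuousOn (fun π : ℝ => Ksq (fun t => π * d t + (1 - π) * m₀ t) m₀)
        (Set.Icc (0 : ℝ) 1) ∧
    StrictMonoOn (fun π : ℝ => Ksq (fun t => π * d t + (1 - π) * m₀ t) m₀)
        (Set.Icc (0 : ℝ) 1) ∧
    Ksq (fun t => (0 : ℝ) * d t + (1 - 0) * m₀ t) m₀ = 0 ∧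
    Ksq (fun t => (1 : ℝ) * d t + (1 - 1) * m₀ t) m₀ = Ksq d m₀ ∧
    ∀ c : ℝ, 0 ≤ c → c ≤ Ksq d m₀ →
      ∃! π : ℝ, π ∈ Set.Icc (0 : ℝ) 1 ∧
        Ksq (fun t => π * d t + (1 - π) * m₀ t) m₀ = c :=
  pi_c_correspondence_general d m₀ hd hm hne
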